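/- Let d ≥ 1 and let L = {L_i}_{i=1}^{d²} be a measure basis for d×d complex matrices with all weights l_i = tr L_i strictly positive. Let S_L be its rescaled frame operator and let T be the unique positive self-adjoint (with respect to the Hilbert–Schmidt inner product) linear map on Hermitian matrices with T∘T = S_L^{-1}. Then the family F_i := T(L_i) is a Wigner basis with tr F_i = l_i for all i; that is, Σ_i F_i = I, tr(F_i F_j) = l_i δ_{ij}, and {F_i} is linearly independent. -/
import Mathlib


open Matrix BigOperators
open scoped ComplexOrder Kronecker

/-- A measure basis: a linearly independent family of `d²` Hermitian `d×d` complex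
matrices summing to the identity, with nonnegative traces. -/
def IsMeasureBasis {d : ℕ} (L : Fin (d ^ 2) → Matrix (Fin d) (Fin d) ℂ) : Prop :=
  (∀ i, (L i).IsHermitian) ∧ LinearIndependent ℝ L ∧ (∑ i, L i) = 1 ∧ ∀ i, 0 ≤ ((L i).trace).re

/-- A Wigner basis: an orthogonal measure basis. -/
def IsWignerBasis {d : ℕ} (L : Fin (d ^ 2) → Matrix (Fin d) (Fin d) ℂ) : Prop :=
  IsMeasureBasis L ∧ ∀ i j, i ≠ j → (L i * L j).trace = 0

/-- The rescaled frame operator `S_L(X) = ∑ⱼ (tr(X Lⱼ)/lⱼ) Lⱼ`. -/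
noncomputable def rsFrameOp {n : Type*} [Fintype n] {m : Type*} [Fintype m] [DecidableEq m]
    (L : n → Matrix m m ℂ) (X : Matrix m m ℂ) : Matrix m m ℂ :=
  ∑ j, (((X * L j).trace) / ((L j).trace)) • L j

/-- A map on matrices that is ℝ-linear, Hermiticity-preserving, self-adjoint with respect to
the Hilbert–Schmidt inner product on Hermitian matrices, and positive. -/
def IsPosSelfAdjMap {m : Type*} [Fintype m]
    (T : Matrix m m ℂ → Matrix m m ℂ) : Prop :=
  IsLinearMap ℝ T ∧ (∀ X, X.IsHermitian → (T X).IsHermitian) ∧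
  (∀ X Y, X.IsHermitian → Y.IsHermitian → (T X * Y).trace = (X * T Y).trace) ∧
  (∀ X, X.IsHermitian → 0 ≤ ((X * T X).trace).re)

/-- `T` is the (unique) positive self-adjoint inverse square root of the rescaled frame
operator of `L`, i.e. `S_L ∘ T ∘ T = id` on Hermitian matrices; `PW(L) i = T (L i)`. -/
def IsInvSqrtOfFrameOp {n : Type*} [Fintype n] {m : Type*} [Fintype m] [DecidableEq m]
    (L : n → Matrix m m ℂ) (T : Matrix m m ℂ → Matrix m m ℂ) : Prop :=
  IsPosSelfAdjMap T ∧ ∀ X : Matrix m m ℂ, X.IsHermitian → rsFrameOp L (T (T X)) = X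

/-! ### Auxiliary lemmas -/

/-- Real coercion smul agrees with real smul on complex matrices. -/
lemma aux_ofReal_smul_mat {m : Type*} (r : ℝ) (A : Matrix m m ℂ) :
    ((r : ℂ)) • A = r • A := by
  ext i j
  simp [Matrix.smul_apply, Complex.real_smul]

/-- The trace of a product of Hermitian matrices is real. -/
lemma aux_herm_trace_mul_real {m : Type*} [Fintype m] {A B : Matrix m m ℂ}
    (hA : A.IsHermitian) (hB : B.IsHermitian) :
    (A * B).trace = (((A * B).trace.re : ℝ) : ℂ) := by
  have h : (starRingEnd ℂ) (A * B).trace = (A * B).trace := by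
    have := Matrix.trace_conjTranspose (A * B)
    rw [Matrix.conjTranspose_mul, hA.eq, hB.eq, Matrix.trace_mul_comm] at this
    exact this.symm
  exact (Complex.conj_eq_iff_re.mp h).symm

/-- The trace of a Hermitian matrix is real. -/
lemma aux_herm_trace_real {m : Type*} [Fintype m] {A : Matrix m m ℂ}
    (hA : A.IsHermitian) : A.trace = ((A.trace.re : ℝ) : ℂ) := by
  have h : (starRingEnd ℂ) A.trace = A.trace := by
    have := Matrix.trace_conjTranspose A
    rw [hA.eq] at this
    exact this.symm
  exact (Complex.conj_eq_iff_re.mp h).symm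

/-- For a Hermitian matrix, the trace of its square is the (real) sum of squared norms of
its entries. -/
lemma aux_herm_trace_sq {m : Type*} [Fintype m] {A : Matrix m m ℂ}
    (hA : A.IsHermitian) :
    (A * A).trace = ((∑ i, ∑ j, Complex.normSq (A i j) : ℝ) : ℂ) := by
  have hc : ∀ i j, A j i = (starRingEnd ℂ) (A i j) := by
    intro i j
    conv_lhs => rw [← hA.eq]
    simp [Matrix.conjTranspose_apply]
  unfold Matrix.trace
  push_cast
  refine Finset.sum_congr rfl fun i _ => ?_
  simp only [Matrix.diag_apply, Matrix.mul_apply]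
  refine Finset.sum_congr rfl fun j _ => ?_
  rw [hc i j, Complex.mul_conj]

lemma aux_herm_sq_zero {m : Type*} [Fintype m] {A : Matrix m m ℂ}
    (hA : A.IsHermitian) (h : ((A * A).trace).re ≤ 0) : A = 0 := by
  rw [aux_herm_trace_sq hA] at h
  simp only [Complex.ofReal_re] at h
  have hnn : ∀ i ∈ Finset.univ, (0:ℝ) ≤ ∑ j, Complex.normSq (A i j) :=
    fun i _ => Finset.sum_nonneg fun j _ => Complex.normSq_nonneg _
  have hz : ∑ i, ∑ j, Complex.normSq (A i j) = 0 :=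
    le_antisymm h (Finset.sum_nonneg hnn)
  have h1 := (Finset.sum_eq_zero_iff_of_nonneg hnn).mp hz
  ext i j
  have h2 := (Finset.sum_eq_zero_iff_of_nonneg
    (fun j _ => Complex.normSq_nonneg (A i j))).mp (h1 i (Finset.mem_univ i))
  simpa using Complex.normSq_eq_zero.mp (h2 j (Finset.mem_univ j))

/-- Key coefficient lemma: reading off the coefficients of the frame operator against a
linearly independent family. -/
lemma aux_frame_coeff {d : ℕ} (L : Fin (d ^ 2) → Matrix (Fin d) (Fin d) ℂ)
    (hherm : ∀ i, (L i).IsHermitian) (hlin : LinearIndependent ℝ L)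
    (hpos : ∀ i, 0 < ((L i).trace).re)
    {X : Matrix (Fin d) (Fin d) ℂ} (hX : X.IsHermitian)
    {c : Fin (d ^ 2) → ℝ} (hS : rsFrameOp L X = ∑ k, (c k) • L k) :
    ∀ k, (X * L k).trace = ((c k : ℝ) : ℂ) * (L k).trace := by
  have hne : ∀ k, ((L k).trace).re ≠ 0 := fun k => ne_of_gt (hpos k)
  set a : Fin (d ^ 2) → ℝ := fun k => ((X * L k).trace).re / ((L k).trace).re with ha
  have hframe : rsFrameOp L X = ∑ k, a k • L k := by
    unfold rsFrameOp
    refine Finset.sum_congr rfl fun k _ => ?_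
    rw [aux_herm_trace_mul_real hX (hherm k), aux_herm_trace_real (hherm k),
      ← Complex.ofReal_div, aux_ofReal_smul_mat]
  have h0 : ∑ k, (a k - c k) • L k = 0 := by
    simp only [sub_smul, Finset.sum_sub_distrib, ← hframe, hS, sub_self]
  have hcoeff := Fintype.linearIndependent_iff.mp hlin _ h0
  intro k
  have hak : a k = c k := by
    have := hcoeff k
    linarith [this]
  rw [aux_herm_trace_mul_real hX (hherm k), aux_herm_trace_real (hherm k),
    ← Complex.ofReal_mul]
  congr 1
  rw [← hak, ha]
  exact (div_mul_cancel₀ _ (hne k)).symm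

/-- if `T` is the positive self-adjoint inverse square root of the rescaled
frame operator of a measure basis `L` with strictly positive weights, then
`Fᵢ := T(Lᵢ)` is a Wigner basis with the same weights. -/
theorem principal_wigner_basis_is_wigner {d : ℕ} [NeZero d]
    (L : Fin (d ^ 2) → Matrix (Fin d) (Fin d) ℂ)
    (hL : IsMeasureBasis L) (hpos : ∀ i, 0 < ((L i).trace).re)
    (T : Matrix (Fin d) (Fin d) ℂ → Matrix (Fin d) (Fin d) ℂ)
    (hT : IsInvSqrtOfFrameOp L T) :
    IsWignerBasis (fun i => T (L i)) ∧
    (∀ i, (T (L i)).trace = (L i).trace) ∧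
    (∀ i j, (T (L i) * T (L j)).trace =
      if i = j then (((L i).trace).re : ℂ) else 0) ∧
    LinearIndependent ℝ (fun i => T (L i)) := by
  obtain ⟨hherm, hlin, hsum, htr⟩ := hL
  obtain ⟨⟨hTlin, hTherm, hTsa, hTpos⟩, hTT⟩ := hT
  have hone : (1 : Matrix (Fin d) (Fin d) ℂ).IsHermitian := Matrix.isHermitian_one
  have hermF : ∀ i, (T (L i)).IsHermitian := fun i => hTherm _ (hherm i)
  -- Step 1: tr(T(T(Lⱼ)) Lₖ) = δⱼₖ lₖ
  have step1 : ∀ j k, (T (T (L j)) * L k).trace =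
      if k = j then (L k).trace else 0 := by
    intro j k
    have hS : rsFrameOp L (T (T (L j))) = ∑ k, (if k = j then (1:ℝ) else 0) • L k := by
      rw [hTT (L j) (hherm j)]
      simp [ite_smul]
    have := aux_frame_coeff L hherm hlin hpos (hTherm _ (hTherm _ (hherm j))) hS k
    rw [this]
    by_cases h : k = j <;> simp [h]
  -- Step 2: tr(Fᵢ Fⱼ) = δᵢⱼ lᵢ
  have step2 : ∀ i j, (T (L i) * T (L j)).trace =
      if i = j then (L i).trace else 0 := by
    intro i j
    rw [hTsa (L i) (T (L j)) (hherm i) (hermF j), Matrix.trace_mul_comm,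
      step1 j i]
  -- ℂ-linear independence of L
  have clin : LinearIndependent ℂ L := by
    rw [Fintype.linearIndependent_iff]
    intro g hg
    have hg' : ∑ k, (starRingEnd ℂ) (g k) • L k = 0 := by
      have h := congrArg Matrix.conjTranspose hg
      simpa [Matrix.conjTranspose_sum, Matrix.conjTranspose_smul, (hherm _).eq] using h
    have hre : ∀ k, (g k).re = 0 := by
      have h1 : ∑ k, ((2 * (g k).re : ℝ) : ℂ) • L k = 0 := by
        have : (∑ k, g k • L k) + ∑ k, (starRingEnd ℂ) (g k) • L k = 0 := by
          rw [hg, hg', add_zero]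
        rw [← Finset.sum_add_distrib] at this
        rw [← this]
        refine Finset.sum_congr rfl fun k _ => ?_
        rw [← add_smul, Complex.add_conj]
      have h2 : ∑ k, (2 * (g k).re) • L k = 0 := by
        rw [← h1]
        exact Finset.sum_congr rfl fun k _ => (aux_ofReal_smul_mat _ _).symm
      intro k
      have := Fintype.linearIndependent_iff.mp hlin _ h2 k
      linarith
    have him : ∀ k, (g k).im = 0 := by
      have h1 : ∑ k, (((2 * (g k).im : ℝ) : ℂ) * Complex.I) • L k = 0 := by
        have : (∑ k, g k • L k) - ∑ k, (starRingEnd ℂ) (g k) • L k = 0 := by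
          rw [hg, hg', sub_zero]
        rw [← Finset.sum_sub_distrib] at this
        rw [← this]
        refine Finset.sum_congr rfl fun k _ => ?_
        rw [← sub_smul, Complex.sub_conj]
      have h1' : ∑ k, ((2 * (g k).im : ℝ) : ℂ) • L k = 0 := by
        have h := congrArg (fun M => (-Complex.I) • M) h1
        simp only [Finset.smul_sum, smul_zero] at h
        rw [← h]
        refine Finset.sum_congr rfl fun k _ => ?_
        rw [smul_smul]
        rw [show -Complex.I * (((2 * (g k).im : ℝ) : ℂ) * Complex.I)
            = ((2 * (g k).im : ℝ) : ℂ) * -(Complex.I * Complex.I) from by ring,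
          Complex.I_mul_I]
        ring
      have h2 : ∑ k, (2 * (g k).im) • L k = 0 := by
        rw [← h1']
        exact Finset.sum_congr rfl fun k _ => (aux_ofReal_smul_mat _ _).symm
      intro k
      have := Fintype.linearIndependent_iff.mp hlin _ h2 k
      linarith
    intro k
    exact Complex.ext (hre k) (him k)
  -- L is a ℂ-basis of the matrix space
  haveI : Nonempty (Fin (d ^ 2)) :=
    ⟨⟨0, Nat.pos_of_ne_zero (pow_ne_zero 2 (NeZero.ne d))⟩⟩
  have hcard : Fintype.card (Fin (d ^ 2)) =
      Module.finrank ℂ (Matrix (Fin d) (Fin d) ℂ) := by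
    rw [Module.finrank_matrix]
    simp [sq]
  let B := basisOfLinearIndependentOfCardEqFinrank clin hcard
  have hB : ⇑B = L := coe_basisOfLinearIndependentOfCardEqFinrank clin hcard
  -- Step 3: tr(T(T(1)) Lₖ) = lₖ
  have hu : ∀ k, (T (T 1) * L k).trace = (L k).trace := by
    intro k
    have hS : rsFrameOp L (T (T 1)) = ∑ k, (1:ℝ) • L k := by
      rw [hTT 1 hone, ← hsum]
      simp
    have := aux_frame_coeff L hherm hlin hpos (hTherm _ (hTherm _ hone)) hS k
    simpa using this
  -- Step 4: T(T(1)) = 1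
  have hu1 : T (T 1) = 1 := by
    set w := T (T 1) - 1 with hw
    have hwherm : w.IsHermitian := (hTherm _ (hTherm _ hone)).sub hone
    have hwL : ∀ k, (w * L k).trace = 0 := by
      intro k
      rw [hw, Matrix.sub_mul, Matrix.trace_sub, hu k, Matrix.one_mul, sub_self]
    have hww : (w * w).trace = 0 := by
      have hrepr := B.sum_repr w
      calc (w * w).trace = (w * ∑ k, B.repr w k • B k).trace := by rw [hrepr]
        _ = ∑ k, B.repr w k * (w * L k).trace := by
            rw [Matrix.mul_sum, Matrix.trace_sum]
            refine Finset.sum_congr rfl fun k _ => ?_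
            rw [Matrix.mul_smul, Matrix.trace_smul, hB, smul_eq_mul]
        _ = 0 := by simp [hwL]
    have : w = 0 := aux_herm_sq_zero hwherm (by rw [hww]; simp)
    rw [hw] at this
    exact sub_eq_zero.mp this
  -- Step 5: T 1 = 1
  have hT1 : T 1 = 1 := by
    set v := T 1 - 1 with hv
    have hvherm : v.IsHermitian := (hTherm _ hone).sub hone
    have hTv : T v = -v := by
      rw [hv, hTlin.map_sub, hu1]
      abel
    have hp := hTpos v hvherm
    rw [hTv, Matrix.mul_neg, Matrix.trace_neg] at hp
    have : v = 0 := aux_herm_sq_zero hvherm (by simpa using hp)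
    rw [hv] at this
    exact sub_eq_zero.mp this
  -- Sum of the Fᵢ is 1
  have sumF : ∑ i, T (L i) = 1 := by
    have : ∑ i, T (L i) = T (∑ i, L i) :=
      (map_sum (IsLinearMap.mk' T hTlin) L Finset.univ).symm
    rw [this, hsum, hT1]
  -- Traces are preserved
  have traceF : ∀ i, (T (L i)).trace = (L i).trace := by
    intro i
    have := hTsa (L i) 1 (hherm i) hone
    rw [hT1] at this
    simpa using this
  -- The orthogonality relation with real weights
  have traceFF : ∀ i j, (T (L i) * T (L j)).trace =
      if i = j then (((L i).trace).re : ℂ) else 0 := by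
    intro i j
    rw [step2 i j]
    rcases eq_or_ne i j with h | h
    · subst h
      rw [if_pos rfl, if_pos rfl]
      exact aux_herm_trace_real (hherm i)
    · rw [if_neg h, if_neg h]
  -- Linear independence of the Fᵢ
  have linF : LinearIndependent ℝ (fun i => T (L i)) := by
    rw [Fintype.linearIndependent_iff]
    intro g hg j
    have h := congrArg (fun M => (M * T (L j)).trace) hg
    simp only [Finset.sum_mul, Matrix.smul_mul, Matrix.trace_sum, Matrix.trace_smul,
      Matrix.zero_mul, Matrix.trace_zero] at h
    have h2 : ∑ i, g i • (T (L i) * T (L j)).trace = 0 := h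
    rw [Finset.sum_congr rfl (fun i _ => by rw [traceFF i j])] at h2
    simp only [smul_ite, smul_zero, Finset.sum_ite_eq', Finset.mem_univ, if_true] at h2
    have h3 : (g j : ℂ) * (((L j).trace).re : ℂ) = 0 := by
      rw [← Complex.real_smul]
      exact h2
    rcases mul_eq_zero.mp h3 with h4 | h4
    · exact_mod_cast h4
    · exact absurd (by exact_mod_cast h4) (ne_of_gt (hpos j))
  refine ⟨⟨⟨hermF, linF, sumF, fun i => ?_⟩, fun i j hij => ?_⟩, traceF, traceFF, linF⟩
  · rw [traceF i]; exact (hpos i).le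
  · rw [step2 i j]; simp [hij]
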